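/- arXiv:2109.01930 — 3 statements merged into one kernel-verified Lean document; each statement's English description precedes it below -/
import Mathlib

section
/- Two orientations O⃗₁ and O⃗₂ of a connected finite graph G are in the same cycle reversal class if and only if O⃗₁ − O⃗₂ ∈ ker(D) ∩ Z^E, and this holds if and only if O⃗₁ can be obtained from O⃗₂ by reversing a collection of pairwise edge-disjoint directed cycles. -/
open Function

namespace GB

structure Graph where
  V : Type
  E : Type
  [fV : Fintype V]
  [fE : Fintype E]
  [dV : DecidableEq V]
  [dE : DecidableEq E]
  tail : E → V
  head : E → V

attribute [instance] Graph.fV Graph.fE Graph.dV Graph.dE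

variable (G : Graph)

/-- Incidence matrix with respect to the reference orientation. -/
def incMat : Matrix G.V G.E ℝ := fun v e =>
  (if G.head e = v then 1 else 0) - (if G.tail e = v then 1 else 0)

/-- The incidence linear map. -/
noncomputable def DMap : (G.E → ℝ) →ₗ[ℝ] (G.V → ℝ) := (incMat G).mulVecLin

/-- Cycle space: kernel of the incidence matrix (equal to ker of D with a row removed). -/
noncomputable def cycleSpace : Submodule ℝ (G.E → ℝ) := LinearMap.ker (DMap G)

/-- Cocycle space: row space of the incidence matrix (= im(D^T) for connected G). -/
noncomputable def cocycleSpace : Submodule ℝ (G.E → ℝ) :=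
  LinearMap.range ((incMat G).transpose.mulVecLin)

def Connected : Prop :=
  ∀ f : G.V → ℝ, (∀ e, f (G.head e) = f (G.tail e)) → ∀ v w, f v = f w

/-- a {0,±1}-vector -/
def IsZPM (x : G.E → ℝ) : Prop := ∀ e, x e = 0 ∨ x e = 1 ∨ x e = -1

/-- A directed cycle, identified with a support-minimal nonzero {0,±1}-vector of the
cycle space (a signed circuit of the graphic matroid). -/
def IsDirCycle (x : G.E → ℝ) : Prop :=
  x ∈ cycleSpace G ∧ x ≠ 0 ∧ IsZPM G x ∧
    ∀ y ∈ cycleSpace G, y ≠ 0 → support y ⊆ support x → support y = support x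

/-- A directed cocycle (signed cocircuit). -/
def IsDirCocycle (x : G.E → ℝ) : Prop :=
  x ∈ cocycleSpace G ∧ x ≠ 0 ∧ IsZPM G x ∧
    ∀ y ∈ cocycleSpace G, y ≠ 0 → support y ⊆ support x → support y = support x

def IsCycle (C : Set G.E) : Prop := ∃ x, IsDirCycle G x ∧ support x = C
def IsCocycle (C : Set G.E) : Prop := ∃ x, IsDirCocycle G x ∧ support x = C

/-- Orientations are identified with {0,1}-vectors, (1,…,1) being the reference orientation. -/
def IsOrientation (O : G.E → ℝ) : Prop := ∀ e, O e = 0 ∨ O e = 1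

/-- the ±1 direction of edge e in orientation O -/
def dir (O : G.E → ℝ) (e : G.E) : ℝ := 2 * O e - 1

/-- the signed vector x (e.g. a directed cycle or partial orientation) is contained in O -/
def InOrient (x O : G.E → ℝ) : Prop := ∀ e, x e = 0 ∨ x e = dir G O e

def IsIntVec (x : G.E → ℝ) : Prop := ∀ e, ∃ n : ℤ, x e = (n : ℝ)

/-- x is a sum of pairwise edge-disjoint directed cycles -/
def SumDisjDirCycles (x : G.E → ℝ) : Prop :=
  ∃ (n : ℕ) (c : Fin n → (G.E → ℝ)), (∀ i, IsDirCycle G (c i)) ∧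
    (∀ i j, i ≠ j → Disjoint (support (c i)) (support (c j))) ∧ x = ∑ i, c i

/-- x is a sum of pairwise edge-disjoint directed cocycles -/
def SumDisjDirCocycles (x : G.E → ℝ) : Prop :=
  ∃ (n : ℕ) (c : Fin n → (G.E → ℝ)), (∀ i, IsDirCocycle G (c i)) ∧
    (∀ i j, i ≠ j → Disjoint (support (c i)) (support (c j))) ∧ x = ∑ i, c i

/-- A cycle signature: a choice of direction for each cycle. -/
structure CycSig (G : Graph) where
  s : Set G.E → (G.E → ℝ)
  mem : ∀ C, IsCycle G C → IsDirCycle G (s C) ∧ support (s C) = C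

/-- A cocycle signature. -/
structure CocycSig (G : Graph) where
  s : Set G.E → (G.E → ℝ)
  mem : ∀ C, IsCocycle G C → IsDirCocycle G (s C) ∧ support (s C) = C

open Classical in
/-- σ is acyclic: no nontrivial nonnegative combination of the σ(C) vanishes. -/
noncomputable def AcyclicSig (σ : CycSig G) : Prop :=
  ∀ a : Set G.E → ℝ, (∀ C, 0 ≤ a C) →
    ∑ C ∈ Finset.univ.filter (fun C => IsCycle G C), a C • σ.s C = 0 →
    ∀ C, IsCycle G C → a C = 0

open Classical in
noncomputable def AcyclicCosig (σ : CocycSig G) : Prop :=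
  ∀ a : Set G.E → ℝ, (∀ C, 0 ≤ a C) →
    ∑ C ∈ Finset.univ.filter (fun C => IsCocycle G C), a C • σ.s C = 0 →
    ∀ C, IsCocycle G C → a C = 0

/-- O is σ-compatible: every directed cycle in O is the chosen one. -/
def SigCompatible (σ : CycSig G) (O : G.E → ℝ) : Prop :=
  ∀ x, IsDirCycle G x → InOrient G x O → x = σ.s (support x)

def CosigCompatible (σ : CocycSig G) (O : G.E → ℝ) : Prop :=
  ∀ x, IsDirCocycle G x → InOrient G x O → x = σ.s (support x)

def Compatible (σc : CycSig G) (σs : CocycSig G) (O : G.E → ℝ) : Prop :=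
  SigCompatible G σc O ∧ CosigCompatible G σs O

/-- one step of cycle reversal -/
def CycRev (O O' : G.E → ℝ) : Prop :=
  ∃ x, IsDirCycle G x ∧ InOrient G x O ∧ O' = O - x

/-- cycle reversal equivalence -/
def SameCycClass : (G.E → ℝ) → (G.E → ℝ) → Prop := Relation.EqvGen (CycRev G)

/-- one step of cycle or cocycle reversal -/
def CCRev (O O' : G.E → ℝ) : Prop :=
  ∃ x, (IsDirCycle G x ∨ IsDirCocycle G x) ∧ InOrient G x O ∧ O' = O - x

/-- cycle-cocycle reversal equivalence -/
def SameCCClass : (G.E → ℝ) → (G.E → ℝ) → Prop := Relation.EqvGen (CCRev G)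

/-- x is the directed fundamental cycle of e ∉ T, directed along the reference arc of e -/
def FundCycle (T : Finset G.E) (e : G.E) (x : G.E → ℝ) : Prop :=
  IsDirCycle G x ∧ x e = 1 ∧ support x ⊆ insert e (↑T : Set G.E)

/-- x is the directed fundamental cocycle of e ∈ T -/
def FundCocycle (T : Finset G.E) (e : G.E) (x : G.E → ℝ) : Prop :=
  IsDirCocycle G x ∧ x e = 1 ∧ support x ⊆ insert e ((↑T : Set G.E)ᶜ)

/-- T is a spanning tree: it contains no cycle and its complement contains no cocycle. -/
def IsSpanningTree (T : Finset G.E) : Prop :=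
  (∀ x, IsDirCycle G x → ¬ support x ⊆ (↑T : Set G.E)) ∧
  (∀ x, IsDirCocycle G x → ¬ support x ⊆ ((↑T : Set G.E)ᶜ))

/-- O = g_{σ,σ*}(T): each e ∉ T is oriented along σ(C(T,e)), each e ∈ T along σ*(C*(T,e)). -/
def GOrient (σc : CycSig G) (σs : CocycSig G) (T : Finset G.E) (O : G.E → ℝ) : Prop :=
  IsOrientation G O ∧
  (∀ e ∉ T, ∀ x, FundCycle G T e x → dir G O e = σc.s (support x) e) ∧
  (∀ e ∈ T, ∀ x, FundCocycle G T e x → dir G O e = σs.s (support x) e)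

/-- φ_{σ,σ*}(O) = S : O is obtained from the compatible orientation O^cp = g(T) by reversing
disjoint directed cycles c i and cocycles d j, and S = T ∪ (⊎ C_i) \ (⊎ C*_j). -/
def PhiRel (σc : CycSig G) (σs : CocycSig G) (O : G.E → ℝ) (S : Set G.E) : Prop :=
  ∃ (T : Finset G.E) (Ocp : G.E → ℝ) (n m : ℕ)
    (c : Fin n → (G.E → ℝ)) (d : Fin m → (G.E → ℝ)),
    IsSpanningTree G T ∧ Compatible G σc σs Ocp ∧ GOrient G σc σs T Ocp ∧
    (∀ i, IsDirCycle G (c i) ∧ InOrient G (c i) Ocp) ∧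
    (∀ j, IsDirCocycle G (d j) ∧ InOrient G (d j) Ocp) ∧
    (∀ i j, i ≠ j → Disjoint (support (c i)) (support (c j))) ∧
    (∀ i j, i ≠ j → Disjoint (support (d i)) (support (d j))) ∧
    (∀ i j, Disjoint (support (c i)) (support (d j))) ∧
    O = Ocp - (∑ i, c i) - (∑ j, d j) ∧
    S = ((↑T : Set G.E) ∪ (⋃ i, support (c i))) \ (⋃ j, support (d j))


/-- the cube of continuous orientations -/
def cube : Set (G.E → ℝ) := {x | ∀ e, 0 ≤ x e ∧ x e ≤ 1}

/-- x is a σ-compatible continuous orientation -/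
def ContSigCompat (σ : CycSig G) (x : G.E → ℝ) : Prop :=
  x ∈ cube G ∧ ∀ ε : ℝ, 0 < ε → ∀ C, IsCycle G C → x + ε • σ.s C ∉ cube G

/-- S̃_σ = S_σ + (im(D^T) ∩ ℤ^E) -/
def Stilde (σ : CycSig G) : Set (G.E → ℝ) :=
  {x | ∃ s, ContSigCompat G σ s ∧ ∃ v, v ∈ cocycleSpace G ∧ IsIntVec G v ∧ x = s + v}

end GB

/-!
A cycle reversal changes an orientation by a directed cycle, an integral vector of the cycle
space, so orientations in one class differ by such a vector. Conversely, if `O₁ - O₂` lies in the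
cycle space then `O₂ - O₁` is a {0,±1}-flow whose arcs all belong to `O₂`. Every vertex entered by
the flow is also left by it, so following its arcs closes up a directed cycle of `O₂` carried by
the flow; removing it leaves a flow of smaller support. Hence `O₂ - O₁` is a sum of edge-disjoint
directed cycles of `O₂`, and reversing them one at a time never destroys the later ones.
-/

namespace GB

variable {G : Graph}

lemma DMap_apply (w : G.E → ℝ) (u : G.V) : DMap G w u = ∑ a, incMat G u a * w a := rfl

lemma mem_cycleSpace_iff {w : G.E → ℝ} : w ∈ cycleSpace G ↔ ∀ u, DMap G w u = 0 :=
  LinearMap.mem_ker.trans funext_iff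

lemma IsZPM.eq_one_or_eq_neg_one {y : G.E → ℝ} (hy : IsZPM G y) {a : G.E} (ha : y a ≠ 0) :
    y a = 1 ∨ y a = -1 :=
  (hy a).resolve_left ha

/-- The endpoints of `a` when it is traversed in the direction given by the sign of `y a`. -/
noncomputable def arcTail (y : G.E → ℝ) (a : G.E) : G.V := if y a = 1 then G.tail a else G.head a

noncomputable def arcHead (y : G.E → ℝ) (a : G.E) : G.V := if y a = 1 then G.head a else G.tail a

lemma incMat_mul_eq {y : G.E → ℝ} {a : G.E} (ha : y a = 1 ∨ y a = -1) (u : G.V) :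
    incMat G u a * y a =
      (if arcHead y a = u then 1 else 0) - (if arcTail y a = u then 1 else 0) := by
  rcases ha with ha | ha
  · simp [incMat, arcHead, arcTail, ha]
  · have : (-1 : ℝ) ≠ 1 := by norm_num
    simp only [incMat, arcHead, arcTail, ha, if_neg this]
    ring

lemma exists_arcTail_eq_arcHead {y : G.E → ℝ} (hy : y ∈ cycleSpace G) (hz : IsZPM G y)
    {a : G.E} (ha : y a ≠ 0) : ∃ b, y b ≠ 0 ∧ arcTail y b = arcHead y a := by
  by_contra! hno
  have hterm : ∀ b, 0 ≤ incMat G (arcHead y a) b * y b := by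
    intro b
    by_cases hb : y b = 0
    · simp [hb]
    rw [incMat_mul_eq (hz.eq_one_or_eq_neg_one hb), if_neg (hno b hb)]
    split_ifs <;> norm_num
  have hpos : 0 < incMat G (arcHead y a) a * y a := by
    rw [incMat_mul_eq (hz.eq_one_or_eq_neg_one ha), if_pos rfl, if_neg (hno a ha)]
    norm_num
  have hsum := mem_cycleSpace_iff.1 hy (arcHead y a)
  rw [DMap_apply] at hsum
  exact (Finset.sum_pos' (fun b _ => hterm b) ⟨a, Finset.mem_univ a, hpos⟩).ne' hsum

section ClosedWalk

/- A closed walk of `y` visits the vertices `f^[n] x` and leaves `f^[n] x` along `out (f^[n] x)`.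
Periodicity of `x` makes `f` injective along the walk, so every vertex of the walk is entered and
left by exactly one edge of the walk. -/

variable {y : G.E → ℝ} {f : G.V → G.V} {out : G.V → G.E} {x : G.V} {p : ℕ}

def IsOutArc (y : G.E → ℝ) (f : G.V → G.V) (out : G.V → G.E) (u : G.V) : Prop :=
  y (out u) ≠ 0 ∧ arcTail y (out u) = u ∧ arcHead y (out u) = f u

lemma out_iterate_eq_iff (harc : ∀ n, IsOutArc y f out (f^[n] x)) {m n : ℕ} :
    out (f^[m] x) = out (f^[n] x) ↔ f^[m] x = f^[n] x :=
  ⟨fun h => by rw [← (harc m).2.1, h, (harc n).2.1], congrArg out⟩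

lemma iterate_succ_eq_iff (hx : IsPeriodicPt f p x) (hp : 0 < p) {m n : ℕ} :
    f^[m + 1] x = f^[n + 1] x ↔ f^[m] x = f^[n] x := by
  simp only [Function.iterate_succ_apply']
  exact ⟨(hx.apply_iterate m).eq_of_apply_eq_same (hx.apply_iterate n) hp, congrArg f⟩

lemma DMap_apply_iterate_succ (hy : IsZPM G y) (hx : IsPeriodicPt f p x) (hp : 0 < p)
    (harc : ∀ n, IsOutArc y f out (f^[n] x)) {w : G.E → ℝ}
    (hw : support w ⊆ Set.range fun n => out (f^[n] x)) (n : ℕ) :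
    DMap G w (f^[n + 1] x) = y (out (f^[n] x)) * w (out (f^[n] x)) -
      y (out (f^[n + 1] x)) * w (out (f^[n + 1] x)) := by
  have hterm : ∀ a, incMat G (f^[n + 1] x) a * w a = y a * w a *
      ((if a = out (f^[n] x) then 1 else 0) - (if a = out (f^[n + 1] x) then 1 else 0)) := by
    intro a
    by_cases hwa : w a = 0
    · simp [hwa]
    obtain ⟨m, rfl⟩ := hw hwa
    have hsq := mul_self_eq_one_iff.2 (hy.eq_one_or_eq_neg_one (harc m).1)
    have hinc := incMat_mul_eq (hy.eq_one_or_eq_neg_one (harc m).1) (f^[n + 1] x)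
    simp only [(harc m).2.1, (harc m).2.2, ← Function.iterate_succ_apply' f m x,
      iterate_succ_eq_iff hx hp, ← out_iterate_eq_iff harc] at hinc
    linear_combination (y (out (f^[m] x)) * w (out (f^[m] x))) * hinc -
      incMat G (f^[n + 1] x) (out (f^[m] x)) * w (out (f^[m] x)) * hsq
  rw [DMap_apply, Finset.sum_congr rfl fun a _ => hterm a]
  simp only [mul_sub, mul_ite, mul_one, mul_zero, Finset.sum_sub_distrib, Finset.sum_ite_eq',
    Finset.mem_univ, if_true]

lemma indicator_range_mem_cycleSpace (hy : IsZPM G y) (hx : IsPeriodicPt f p x) (hp : 0 < p)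
    (harc : ∀ n, IsOutArc y f out (f^[n] x)) :
    (Set.range fun n => out (f^[n] x)).indicator y ∈ cycleSpace G := by
  set c := (Set.range fun n => out (f^[n] x)).indicator y
  have hc : support c ⊆ Set.range fun n => out (f^[n] x) := Set.support_indicator_subset
  have hcy : ∀ n, c (out (f^[n] x)) = y (out (f^[n] x)) :=
    fun n => Set.indicator_of_mem (Set.mem_range_self n) y
  refine mem_cycleSpace_iff.2 fun u => ?_
  by_cases hu : ∃ n, f^[n + 1] x = u
  · obtain ⟨n, rfl⟩ := hu
    rw [DMap_apply_iterate_succ hy hx hp harc hc, hcy, hcy,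
      mul_self_eq_one_iff.2 (hy.eq_one_or_eq_neg_one (harc n).1),
      mul_self_eq_one_iff.2 (hy.eq_one_or_eq_neg_one (harc (n + 1)).1), sub_self]
  simp only [not_exists] at hu
  refine Finset.sum_eq_zero fun a _ => ?_
  by_cases hca : c a = 0
  · rw [hca, mul_zero]
  obtain ⟨m, rfl⟩ := hc hca
  have hm : f^[m] x ≠ u := by
    rw [← hx.eq, ← Function.iterate_add_apply, ← Nat.sub_add_cancel (by omega : 1 ≤ m + p)]
    exact hu _
  rw [hcy, incMat_mul_eq (hy.eq_one_or_eq_neg_one (harc m).1), (harc m).2.1, (harc m).2.2,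
    ← Function.iterate_succ_apply' f m x, if_neg (hu m), if_neg hm, sub_self]

lemma support_eq_range_of_mem_cycleSpace (hy : IsZPM G y) (hx : IsPeriodicPt f p x)
    (hp : 0 < p) (harc : ∀ n, IsOutArc y f out (f^[n] x)) {w : G.E → ℝ}
    (hw : w ∈ cycleSpace G) (hw0 : w ≠ 0) (hsub : support w ⊆ Set.range fun n => out (f^[n] x)) :
    support w = Set.range fun n => out (f^[n] x) := by
  set q : ℕ → ℝ := fun n => y (out (f^[n] x)) * w (out (f^[n] x))
  have hstep : ∀ n, q (n + 1) = q n := fun n => by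
    have := DMap_apply_iterate_succ hy hx hp harc hsub n
    rw [mem_cycleSpace_iff.1 hw] at this
    linarith
  have hconst : ∀ n, q n = q 0 := fun n => by
    induction n with
    | zero => rfl
    | succ n ih => rw [hstep, ih]
  obtain ⟨a, ha⟩ := Function.ne_iff.1 hw0
  obtain ⟨m, rfl⟩ := hsub ha
  refine hsub.antisymm ?_
  rintro _ ⟨n, rfl⟩
  have hqn : q n ≠ 0 := by
    rw [hconst, ← hconst m]
    exact mul_ne_zero (harc m).1 ha
  exact right_ne_zero_of_mul hqn

lemma isDirCycle_indicator_range (hy : IsZPM G y) (hx : IsPeriodicPt f p x) (hp : 0 < p)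
    (harc : ∀ n, IsOutArc y f out (f^[n] x)) :
    IsDirCycle G ((Set.range fun n => out (f^[n] x)).indicator y) := by
  have hsupp : support ((Set.range fun n => out (f^[n] x)).indicator y) =
      Set.range fun n => out (f^[n] x) := by
    rw [Set.support_indicator, Set.inter_eq_left]
    rintro _ ⟨n, rfl⟩
    exact (harc n).1
  refine ⟨indicator_range_mem_cycleSpace hy hx hp harc, ?_, ?_, fun w hw hw0 hsub => ?_⟩
  · rw [← Function.support_nonempty_iff, hsupp]
    exact Set.range_nonempty _
  · intro a
    by_cases ha : a ∈ Set.range fun n => out (f^[n] x)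
    · rw [Set.indicator_of_mem ha]
      exact hy a
    · exact Or.inl (Set.indicator_of_notMem ha y)
  · rw [hsupp] at hsub ⊢
    exact support_eq_range_of_mem_cycleSpace hy hx hp harc hw hw0 hsub

end ClosedWalk

lemma _root_.Function.exists_isPeriodicPt_iterate {α : Type*} [Finite α] (f : α → α) (x : α) :
    ∃ m p, 0 < p ∧ IsPeriodicPt f p (f^[m] x) := by
  obtain ⟨m, n, hmn, h⟩ := Set.Finite.exists_lt_map_eq_of_forall_mem (f := fun n => f^[n] x)
    (fun _ => Set.mem_univ _) Set.finite_univ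
  refine ⟨m, n - m, by omega, ?_⟩
  rw [IsPeriodicPt, IsFixedPt, ← Function.iterate_add_apply, Nat.sub_add_cancel hmn.le]
  exact h.symm

lemma exists_closed_walk {y : G.E → ℝ} (hy : y ∈ cycleSpace G) (hz : IsZPM G y) (hne : y ≠ 0) :
    ∃ (f : G.V → G.V) (out : G.V → G.E) (x : G.V) (p : ℕ),
      IsPeriodicPt f p x ∧ 0 < p ∧ ∀ n, IsOutArc y f out (f^[n] x) := by
  classical
  obtain ⟨a₀, ha₀⟩ := Function.ne_iff.1 hne
  set A : Set G.V := {u | ∃ b, y b ≠ 0 ∧ arcTail y b = u}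
  let out : G.V → G.E := fun u => if h : u ∈ A then h.choose else a₀
  let f : G.V → G.V := arcHead y ∘ out
  have hA : ∀ u ∈ A, IsOutArc y f out u := fun u hu => by
    have hout : out u = hu.choose := dif_pos hu
    rw [IsOutArc, show f u = arcHead y (out u) from rfl, hout]
    exact ⟨hu.choose_spec.1, hu.choose_spec.2, rfl⟩
  have hmaps : Set.MapsTo f A A := fun u hu => exists_arcTail_eq_arcHead hy hz (hA u hu).1
  obtain ⟨m, p, hp, hx⟩ := Function.exists_isPeriodicPt_iterate f (arcTail y a₀)
  refine ⟨f, out, f^[m] (arcTail y a₀), p, hx, hp, fun n => hA _ ?_⟩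
  rw [← Function.iterate_add_apply]
  exact hmaps.iterate _ ⟨a₀, ha₀, rfl⟩

lemma exists_isDirCycle_of_mem_cycleSpace {y : G.E → ℝ} (hy : y ∈ cycleSpace G)
    (hz : IsZPM G y) (hne : y ≠ 0) : ∃ c, IsDirCycle G c ∧ ∀ a, c a ≠ 0 → c a = y a := by
  obtain ⟨f, out, x, p, hx, hp, harc⟩ := exists_closed_walk hy hz hne
  refine ⟨_, isDirCycle_indicator_range hz hx hp harc, fun a ha => ?_⟩
  by_cases hmem : a ∈ Set.range fun n => out (f^[n] x)
  · exact Set.indicator_of_mem hmem y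
  · exact absurd (Set.indicator_of_notMem hmem y) ha

lemma exists_sum_disjoint_dirCycles {y : G.E → ℝ} (hy : y ∈ cycleSpace G) (hz : IsZPM G y) :
    ∃ (n : ℕ) (c : Fin n → G.E → ℝ), (∀ i, IsDirCycle G (c i)) ∧
      (∀ i a, c i a ≠ 0 → c i a = y a) ∧
      (∀ i j, i ≠ j → Disjoint (support (c i)) (support (c j))) ∧ y = ∑ i, c i := by
  induction hk : (support y).ncard using Nat.strong_induction_on generalizing y with
  | _ k ih =>
  by_cases hne : y = 0
  · exact ⟨0, Fin.elim0, nofun, nofun, nofun, by simp [hne]⟩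
  obtain ⟨c, hc, hcy⟩ := exists_isDirCycle_of_mem_cycleSpace hy hz hne
  have hrest : ∀ a, (y - c) a ≠ 0 → c a = 0 := fun a h => by
    by_contra hca
    exact h (by simp [hcy a hca])
  have hlt : (support (y - c)).ncard < k := by
    rw [← hk]
    refine Set.ncard_lt_ncard ((Set.ssubset_iff_of_subset fun a ha => ?_).2 ?_) (Set.toFinite _)
    · simpa [hrest a ha] using ha
    · obtain ⟨a, ha⟩ := Function.ne_iff.1 hc.2.1
      exact ⟨a, by simpa [hcy a ha] using ha, by simp [hcy a ha]⟩
  have hz' : IsZPM G (y - c) := fun a => by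
    by_cases hca : c a = 0
    · simpa [hca] using hz a
    · exact Or.inl (by simp [hcy a hca])
  obtain ⟨n, d, hd, hdy, hdisj, hsum⟩ := ih _ hlt (sub_mem hy hc.1) hz' rfl
  have hcd : ∀ j, Disjoint (support c) (support (d j)) := fun j =>
    Set.disjoint_left.2 fun a hca hda => hca (hrest a (hdy j a hda ▸ hda))
  refine ⟨n + 1, Fin.cons c d, Fin.cons hc hd, Fin.cons hcy fun i a ha => ?_, ?_,
    by rw [Fin.sum_cons, ← hsum, add_sub_cancel]⟩
  · rw [Fin.cons_succ] at ha ⊢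
    have hda := hdy i a ha
    rw [hda, Pi.sub_apply, hrest a (hda ▸ ha), sub_zero]
  · intro i j hij
    induction i using Fin.cases <;> induction j using Fin.cases
    · exact absurd rfl hij
    · exact hcd _
    · exact (hcd _).symm
    · exact hdisj _ _ (ne_of_apply_ne Fin.succ hij)

lemma IsOrientation.isZPM_sub {O₁ O₂ : G.E → ℝ} (h₁ : IsOrientation G O₁)
    (h₂ : IsOrientation G O₂) : IsZPM G (O₂ - O₁) := fun a => by
  rcases h₁ a with h | h <;> rcases h₂ a with h' | h' <;> simp [h, h']

lemma IsOrientation.inOrient_sub {O₁ O₂ : G.E → ℝ} (h₁ : IsOrientation G O₁)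
    (h₂ : IsOrientation G O₂) : InOrient G (O₂ - O₁) O₂ := fun a => by
  rcases h₁ a with h | h <;> rcases h₂ a with h' | h' <;> norm_num [dir, h, h']

lemma InOrient.mono {y c O : G.E → ℝ} (hy : InOrient G y O) (hc : ∀ a, c a ≠ 0 → c a = y a) :
    InOrient G c O := fun a => by
  by_cases hca : c a = 0
  · exact Or.inl hca
  · rw [hc a hca]
    exact Or.inr ((hy a).resolve_left (hc a hca ▸ hca))

lemma InOrient.sub_of_disjoint {x z O : G.E → ℝ} (hz : InOrient G z O)
    (h : Disjoint (support x) (support z)) : InOrient G z (O - x) := fun a => by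
  by_cases hza : z a = 0
  · exact Or.inl hza
  · have hxa : x a = 0 := Function.notMem_support.1 fun hxa => Set.disjoint_left.1 h hxa hza
    simpa [dir, hxa] using hz a

lemma sameCycClass_sub_sum {n : ℕ} {c : Fin n → G.E → ℝ} {O : G.E → ℝ}
    (hc : ∀ i, IsDirCycle G (c i) ∧ InOrient G (c i) O)
    (hdisj : ∀ i j, i ≠ j → Disjoint (support (c i)) (support (c j))) :
    SameCycClass G O (O - ∑ i, c i) := by
  induction n generalizing O with
  | zero =>
    rw [Finset.univ_eq_empty, Finset.sum_empty, sub_zero]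
    exact Relation.EqvGen.refl O
  | succ n ih =>
    have hstep : CycRev G O (O - c 0) := ⟨c 0, (hc 0).1, (hc 0).2, rfl⟩
    have hrest : SameCycClass G (O - c 0) (O - c 0 - ∑ i : Fin n, c i.succ) :=
      ih (fun i => ⟨(hc i.succ).1,
          (hc i.succ).2.sub_of_disjoint (hdisj _ _ (Fin.succ_ne_zero i).symm)⟩)
        fun i j hij => hdisj _ _ ((Fin.succ_injective n).ne hij)
    rw [Fin.sum_univ_succ, ← sub_sub]
    exact (Relation.EqvGen.rel _ _ hstep).trans _ _ _ hrest

lemma _root_.Relation.EqvGen.sub_mem {α : Type*} [AddGroup α] {r : α → α → Prop}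
    (H : AddSubgroup α) (hr : ∀ a b, r a b → a - b ∈ H) {a b : α} (h : Relation.EqvGen r a b) :
    a - b ∈ H := by
  induction h with
  | rel a b hab => exact hr a b hab
  | refl a => simp
  | symm a b _ ih => simpa using neg_mem ih
  | trans a b c _ _ ihab ihbc => simpa using add_mem ihab ihbc

def intVectors (ι : Type*) : AddSubgroup (ι → ℝ) :=
  AddSubgroup.pi Set.univ fun _ => (Int.castAddHom ℝ).range

lemma mem_intVectors_iff {x : G.E → ℝ} : x ∈ intVectors G.E ↔ IsIntVec G x := by
  simp only [intVectors, AddSubgroup.mem_pi, Set.mem_univ, forall_const, AddMonoidHom.mem_range,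
    Int.coe_castAddHom, IsIntVec, eq_comm]

lemma SameCycClass.sub_mem_cycleSpace {O O' : G.E → ℝ} (h : SameCycClass G O O') :
    O - O' ∈ cycleSpace G :=
  Relation.EqvGen.sub_mem (cycleSpace G).toAddSubgroup
    (by rintro a _ ⟨x, hx, -, rfl⟩; simpa using hx.1) h

lemma SameCycClass.isIntVec_sub {O O' : G.E → ℝ} (h : SameCycClass G O O') :
    IsIntVec G (O - O') := by
  refine mem_intVectors_iff.1 (Relation.EqvGen.sub_mem _ ?_ h)
  rintro a _ ⟨x, hx, -, rfl⟩
  refine mem_intVectors_iff.2 fun e => ?_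
  rcases hx.2.2.1 e with h | h | h
  · exact ⟨0, by simp [h]⟩
  · exact ⟨1, by simp [h]⟩
  · exact ⟨-1, by simp [h]⟩

lemma exists_disjoint_dirCycles_of_sub_mem {O₁ O₂ : G.E → ℝ} (h₁ : IsOrientation G O₁)
    (h₂ : IsOrientation G O₂) (h : O₁ - O₂ ∈ cycleSpace G) :
    ∃ (n : ℕ) (c : Fin n → G.E → ℝ), (∀ i, IsDirCycle G (c i) ∧ InOrient G (c i) O₂) ∧
      (∀ i j, i ≠ j → Disjoint (support (c i)) (support (c j))) ∧ O₁ = O₂ - ∑ i, c i := by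
  rw [← neg_mem_iff, neg_sub] at h
  obtain ⟨n, c, hc, hcy, hdisj, hsum⟩ := exists_sum_disjoint_dirCycles h (h₁.isZPM_sub h₂)
  exact ⟨n, c, fun i => ⟨hc i, (h₁.inOrient_sub h₂).mono (hcy i)⟩, hdisj,
    by rw [← hsum, sub_sub_cancel]⟩

end GB

open GB in
theorem stmt_3_general (G : GB.Graph)
    (O₁ O₂ : G.E → ℝ) (h₁ : GB.IsOrientation G O₁) (h₂ : GB.IsOrientation G O₂) :
    (GB.SameCycClass G O₁ O₂ ↔ (O₁ - O₂ ∈ GB.cycleSpace G ∧ GB.IsIntVec G (O₁ - O₂))) ∧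
    (GB.SameCycClass G O₁ O₂ ↔
      ∃ (n : ℕ) (c : Fin n → (G.E → ℝ)),
        (∀ i, GB.IsDirCycle G (c i) ∧ GB.InOrient G (c i) O₂) ∧
        (∀ i j, i ≠ j → Disjoint (Function.support (c i)) (Function.support (c j))) ∧
        O₁ = O₂ - ∑ i, c i) := by
  have hdecomp := exists_disjoint_dirCycles_of_sub_mem h₁ h₂
  refine ⟨⟨fun h => ⟨h.sub_mem_cycleSpace, h.isIntVec_sub⟩, fun h => ?_⟩,
    ⟨fun h => hdecomp h.sub_mem_cycleSpace, ?_⟩⟩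
  · obtain ⟨n, c, hc, hdisj, rfl⟩ := hdecomp h.1
    exact (sameCycClass_sub_sum hc hdisj).symm
  · rintro ⟨n, c, hc, hdisj, rfl⟩
    exact (sameCycClass_sub_sum hc hdisj).symm

open GB in
theorem stmt_3 (G : GB.Graph) (hconn : GB.Connected G)
    (O₁ O₂ : G.E → ℝ) (h₁ : GB.IsOrientation G O₁) (h₂ : GB.IsOrientation G O₂) :
    (GB.SameCycClass G O₁ O₂ ↔ (O₁ - O₂ ∈ GB.cycleSpace G ∧ GB.IsIntVec G (O₁ - O₂))) ∧
    (GB.SameCycClass G O₁ O₂ ↔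
      ∃ (n : ℕ) (c : Fin n → (G.E → ℝ)),
        (∀ i, GB.IsDirCycle G (c i) ∧ GB.InOrient G (c i) O₂) ∧
        (∀ i j, i ≠ j → Disjoint (Function.support (c i)) (Function.support (c j))) ∧
        O₁ = O₂ - ∑ i, c i) :=
  stmt_3_general G O₁ O₂ h₁ h₂
end

section
/- Let σ be an acyclic cycle signature of a connected finite graph G. Then every cycle reversal equivalence class of orientations of G contains exactly one σ-compatible orientation. -/
open Function

/-!
Within a cycle reversal class, keep reversing directed cycles that oppose σ. Each such reversal
adds σ(C) to the orientation, so returning to an earlier orientation would exhibit a nontrivial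
nonnegative combination of the σ(C) equal to 0; since there are finitely many orientations, the
process stops, and it can only stop at a σ-compatible orientation.

Two σ-compatible orientations in one class differ by a {0,±1}-vector of the cycle space. If it is
nonzero, it has a conformal directed cycle: following the flow yields conformal {0,±1}-flows, and
one of minimal support is a circuit, since a flow with smaller support could be subtracted to
shrink it further. That cycle lies in the first orientation and its reverse in the second, so σ
would have to choose both directions.
-/

namespace Function

theorem exists_iterate_mem_periodicPts {α : Type*} [Finite α] (f : α → α) (x : α) :
    ∃ n, f^[n] x ∈ periodicPts f := by
  obtain ⟨m, n, hne, heq⟩ := Finite.exists_ne_map_eq_of_infinite fun n : ℕ => f^[n] x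
  wlog hlt : m < n generalizing m n
  · exact this n m hne.symm heq.symm (by omega)
  refine ⟨m, mk_mem_periodicPts (n := n - m) (by omega) ?_⟩
  rw [IsPeriodicPt, IsFixedPt, ← iterate_add_apply, Nat.sub_add_cancel hlt.le]
  exact heq.symm

/-- The periodic points of `f` in `s` form the required set. -/
theorem exists_finset_bijOn_of_mapsTo {α : Type*} [Finite α] {f : α → α} {s : Set α}
    (hs : s.Nonempty) (hf : Set.MapsTo f s s) :
    ∃ t : Finset α, ↑t ⊆ s ∧ t.Nonempty ∧ Set.BijOn f t t := by
  classical
  have hfin := (s ∩ periodicPts f).toFinite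
  refine ⟨hfin.toFinset, by simp, ?_, ?_⟩
  · obtain ⟨x, hx⟩ := hs
    obtain ⟨n, hn⟩ := exists_iterate_mem_periodicPts f x
    exact ⟨f^[n] x, by simpa using ⟨hf.iterate n hx, hn⟩⟩
  · rw [hfin.coe_toFinset]
    refine ⟨hf.inter_inter (bijOn_periodicPts f).mapsTo,
      (bijOn_periodicPts f).injOn.mono Set.inter_subset_right, ?_⟩
    rintro y ⟨hys, hyp⟩
    obtain ⟨k, hk, hky⟩ := mem_periodicPts.1 hyp
    refine ⟨f^[k - 1] y, ⟨hf.iterate _ hys, (bijOn_periodicPts f).mapsTo.iterate _ hyp⟩, ?_⟩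
    rw [← iterate_succ_apply' f, Nat.succ_eq_add_one, Nat.sub_add_cancel hk]
    exact hky

end Function

theorem Relation.exists_reflTransGen_forall_not {α : Type*} {r : α → α → Prop}
    (hr : ∀ a, ¬ TransGen r a a) (a : α) (ha : {b | TransGen r a b}.Finite) :
    ∃ b, ReflTransGen r a b ∧ ∀ c, ¬ r b c := by
  induction a using (measure fun a => {b | TransGen r a b}.ncard).wf.induction with
  | _ a ih =>
  by_cases h : ∃ c, r a c
  · obtain ⟨c, hac⟩ := h
    have hlt : {b | TransGen r c b} ⊂ {b | TransGen r a b} :=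
      (Set.ssubset_iff_of_subset fun b hcb => TransGen.head hac hcb).2 ⟨c, .single hac, hr c⟩
    obtain ⟨b, hcb, hb⟩ := ih c (Set.ncard_lt_ncard hlt ha) (ha.subset hlt.subset)
    exact ⟨b, .head hac hcb, hb⟩
  · exact ⟨a, .refl, not_exists.1 h⟩

namespace GB

section Conformal

variable {ι : Type*}

def Conformal (x y : ι → ℝ) : Prop := ∀ i, x i = 0 ∨ 0 < x i * y i

theorem Conformal.support_subset {x y : ι → ℝ} (h : Conformal x y) :
    support x ⊆ support y := fun i hi => by
  rcases h i with h | h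
  · exact absurd h hi
  · exact right_ne_zero_of_mul h.ne'

theorem Conformal.trans {x y z : ι → ℝ} (hxy : Conformal x y) (hyz : Conformal y z) :
    Conformal x z := fun i => by
  rcases hxy i with h | hxy
  · exact .inl h
  rcases hyz i with h | hyz
  · simp [h] at hxy
  · exact .inr (pos_of_mul_pos_left (by nlinarith [mul_pos hxy hyz]) (mul_self_nonneg (y i)))

theorem Conformal.neg {x y : ι → ℝ} (h : Conformal x y) : Conformal (-x) (-y) := fun i => by
  simpa using h i

variable {V : Submodule ℝ (ι → ℝ)}

theorem eq_smul_of_support_subset {x y : ι → ℝ} (hx0 : x ≠ 0)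
    (hmin : ∀ z ∈ V, z ≠ 0 → support z ⊆ support x → support z = support x)
    (hx : x ∈ V) (hy : y ∈ V) (hyx : support y ⊆ support x) :
    ∃ j, x j ≠ 0 ∧ y = (y j / x j) • x := by
  obtain ⟨j, hj⟩ : ∃ j, x j ≠ 0 := Function.ne_iff.1 hx0
  refine ⟨j, hj, sub_eq_zero.1 (by_contra fun hz => ?_)⟩
  have hsupp := hmin _ (sub_mem hy (V.smul_mem _ hx)) hz
    ((support_sub _ _).trans (Set.union_subset hyx (support_smul_subset_right _ _)))
  have : j ∈ support (y - (y j / x j) • x) := hsupp ▸ hj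
  simp [div_mul_cancel₀ _ hj] at this

variable [Fintype ι]

/-- Subtracting from `x` the largest multiple of `y` that keeps the signs of `x` kills an
entry of `x`. -/
theorem exists_conformal_support_ssubset {x y : ι → ℝ} (hx : x ∈ V) (hy : y ∈ V)
    (hy0 : y ≠ 0) (hyx : support y ⊂ support x) :
    ∃ w ∈ V, w ≠ 0 ∧ Conformal w x ∧ support w ⊂ support x := by
  classical
  wlog hpos : ∃ i, 0 < y i * x i generalizing y
  · obtain ⟨i, hi⟩ := Function.ne_iff.1 hy0
    refine this (neg_mem hy) (neg_ne_zero.2 hy0) (by rwa [support_neg]) ⟨i, ?_⟩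
    simp only [Pi.neg_apply, neg_mul, neg_pos]
    exact lt_of_le_of_ne (not_lt.1 fun h => hpos ⟨i, h⟩) (mul_ne_zero hi (hyx.subset hi))
  obtain ⟨i₀, hi₀⟩ := hpos
  obtain ⟨j, hj, hmin⟩ := Finset.exists_min_image (Finset.univ.filter fun i => 0 < y i * x i)
    (fun i => x i / y i) ⟨i₀, by simpa using hi₀⟩
  simp only [Finset.mem_filter, Finset.mem_univ, true_and] at hj hmin
  set r := x j / y j
  have hyj : y j ≠ 0 := left_ne_zero_of_mul hj.ne'
  have hr : 0 < r := by
    have : r * (y j * y j) = y j * x j := by simp only [r]; field_simp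
    exact pos_of_mul_pos_left (this ▸ hj) (mul_self_nonneg _)
  have hconf : Conformal (x - r • y) x := fun i => by
    simp only [Pi.sub_apply, Pi.smul_apply, smul_eq_mul]
    by_cases hxi : x i = 0
    · have hyi : y i = 0 := not_ne_iff.1 fun h => hyx.subset h hxi
      simp [hxi, hyi]
    have hnn : 0 ≤ (x i - r * y i) * x i := by
      by_cases hi : 0 < y i * x i
      · have hyi : y i ≠ 0 := left_ne_zero_of_mul hi.ne'
        have hle := mul_le_mul_of_nonneg_right (hmin i hi) hi.le
        have hxx : x i / y i * (y i * x i) = x i * x i := by field_simp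
        nlinarith
      · nlinarith [mul_nonneg hr.le (neg_nonneg.2 (not_lt.1 hi)), mul_self_nonneg (x i)]
    rcases hnn.eq_or_lt with h | h
    · exact .inl ((mul_eq_zero.1 h.symm).resolve_right hxi)
    · exact .inr h
  refine ⟨x - r • y, sub_mem hx (V.smul_mem r hy), ?_, hconf, ?_⟩
  · obtain ⟨i, hix, hiy⟩ := Set.exists_of_ssubset hyx
    intro h
    have := congrFun h i
    simp_all
  · refine (Set.ssubset_iff_of_subset hconf.support_subset).2
      ⟨j, right_ne_zero_of_mul hj.ne', ?_⟩
    simp [r, hyj]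

end Conformal

variable {G : Graph}

theorem mem_cycleSpace_iff_s5 {x : G.E → ℝ} :
    x ∈ cycleSpace G ↔ ∀ v, ∑ e, incMat G v e * x e = 0 := by
  simp [cycleSpace, DMap, funext_iff, Matrix.mulVec, dotProduct]

noncomputable def tailAlong (w : G.E → ℝ) (e : G.E) : G.V :=
  if 0 < w e then G.tail e else G.head e

noncomputable def headAlong (w : G.E → ℝ) (e : G.E) : G.V :=
  if 0 < w e then G.head e else G.tail e

theorem incMat_mul_eq_s5 (w : G.E → ℝ) (v : G.V) (e : G.E) :
    incMat G v e * w e =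
      |w e| * ((if headAlong w e = v then 1 else 0) - (if tailAlong w e = v then 1 else 0)) := by
  unfold incMat headAlong tailAlong
  rcases lt_trichotomy (w e) 0 with h | h | h
  · simp only [abs_of_neg h, not_lt.2 h.le, if_false]; ring
  · simp [h]
  · simp only [abs_of_pos h, h, if_true]; ring

theorem incMat_mul_sign {w : G.E → ℝ} {e : G.E} (he : w e ≠ 0) (v : G.V) :
    incMat G v e * Real.sign (w e) =
      (if headAlong w e = v then 1 else 0) - (if tailAlong w e = v then 1 else 0) := by
  unfold incMat headAlong tailAlong
  rcases he.lt_or_gt with h | h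
  · simp only [Real.sign_of_neg h, not_lt.2 h.le, if_false]; ring
  · simp only [Real.sign_of_pos h, h, if_true]; ring

theorem exists_tailAlong_eq_headAlong {w : G.E → ℝ} (hw : w ∈ cycleSpace G) {e : G.E}
    (he : w e ≠ 0) : ∃ e', w e' ≠ 0 ∧ tailAlong w e' = headAlong w e := by
  have hbal := mem_cycleSpace_iff_s5.1 hw (headAlong w e)
  simp only [incMat_mul_eq_s5, mul_sub, mul_ite, mul_one, mul_zero, Finset.sum_sub_distrib,
    sub_eq_zero] at hbal
  have hpos : 0 < ∑ e', if tailAlong w e' = headAlong w e then |w e'| else 0 := by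
    rw [← hbal]
    exact Finset.sum_pos' (fun _ _ => by split_ifs <;> positivity)
      ⟨e, Finset.mem_univ _, by simpa using he⟩
  obtain ⟨e', -, he'⟩ := Finset.exists_ne_zero_of_sum_ne_zero hpos.ne'
  by_cases h : tailAlong w e' = headAlong w e
  · exact ⟨e', by simpa [h] using he', h⟩
  · simp [h] at he'

theorem sign_indicator_mem_cycleSpace {w : G.E → ℝ} {S : Finset G.E} {f : G.E → G.E}
    (hS : ∀ e ∈ S, w e ≠ 0) (hf : Set.BijOn f S S)
    (hfS : ∀ e ∈ S, tailAlong w (f e) = headAlong w e) :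
    (fun e => if e ∈ S then Real.sign (w e) else 0) ∈ cycleSpace G := by
  classical
  refine mem_cycleSpace_iff_s5.2 fun v => ?_
  simp only [mul_ite, mul_zero, Finset.sum_ite_mem, Finset.univ_inter]
  rw [Finset.sum_congr rfl fun e he => incMat_mul_sign (hS e he) v, Finset.sum_sub_distrib,
    sub_eq_zero]
  exact Finset.sum_nbij f hf.mapsTo hf.injOn hf.surjOn fun e he => by rw [hfS e he]

theorem exists_isZPM_conformal {w : G.E → ℝ} (hw : w ∈ cycleSpace G) (hw0 : w ≠ 0) :
    ∃ c ∈ cycleSpace G, c ≠ 0 ∧ IsZPM G c ∧ Conformal c w := by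
  classical
  have : ∀ e, ∃ e', w e ≠ 0 → w e' ≠ 0 ∧ tailAlong w e' = headAlong w e := fun e => by
    by_cases he : w e = 0
    · exact ⟨e, fun h => absurd he h⟩
    · exact (exists_tailAlong_eq_headAlong hw he).imp fun _ h _ => h
  choose nxt hnxt using this
  obtain ⟨S, hSw, ⟨e₀, he₀⟩, hbij⟩ := Function.exists_finset_bijOn_of_mapsTo
    (Function.support_nonempty_iff.2 hw0) fun e he => (hnxt e he).1
  refine ⟨_, sign_indicator_mem_cycleSpace (fun e he => hSw he) hbij
    fun e he => (hnxt e (hSw he)).2, Function.ne_iff.2 ⟨e₀, by simpa [he₀] using hSw he₀⟩,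
    fun e => ?_, fun e => ?_⟩ <;> dsimp only
  · split_ifs
    · rcases Real.sign_apply_eq (w e) with h | h | h <;> simp [h]
    · simp
  · split_ifs with he
    · exact .inr (Real.sign_mul_pos_of_ne_zero _ (hSw he))
    · exact .inl rfl

theorem exists_isDirCycle_conformal {z : G.E → ℝ} (hz : z ∈ cycleSpace G) (hz0 : z ≠ 0) :
    ∃ x, IsDirCycle G x ∧ Conformal x z := by
  obtain ⟨c, ⟨hc, hc0, hczpm, hcz⟩, hmin⟩ :=
    (measure fun c : G.E → ℝ => (support c).ncard).wf.has_min
      {c | c ∈ cycleSpace G ∧ c ≠ 0 ∧ IsZPM G c ∧ Conformal c z}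
      (exists_isZPM_conformal hz hz0)
  refine ⟨c, ⟨hc, hc0, hczpm, fun y hy hy0 hyc => by_contra fun hne => ?_⟩, hcz⟩
  obtain ⟨w, hw, hw0, hwc, hwc'⟩ :=
    exists_conformal_support_ssubset hc hy hy0 (hyc.ssubset_of_ne hne)
  obtain ⟨d, hd, hd0, hdzpm, hdw⟩ := exists_isZPM_conformal hw hw0
  exact hmin d ⟨hd, hd0, hdzpm, (hdw.trans hwc).trans hcz⟩
    (Set.ncard_lt_ncard (hdw.support_subset.trans_ssubset hwc'))

theorem IsDirCycle.neg {x : G.E → ℝ} (hx : IsDirCycle G x) : IsDirCycle G (-x) := by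
  obtain ⟨hmem, hne, hzpm, hmin⟩ := hx
  refine ⟨neg_mem hmem, neg_ne_zero.2 hne, fun e => ?_, ?_⟩
  · rcases hzpm e with h | h | h <;> simp [h]
  · simpa only [support_neg] using hmin

theorem IsDirCycle.eq_or_eq_neg {x y : G.E → ℝ} (hx : IsDirCycle G x) (hy : IsDirCycle G y)
    (hyx : support y = support x) : y = x ∨ y = -x := by
  obtain ⟨j, hj, hyj⟩ := eq_smul_of_support_subset hx.2.1 hx.2.2.2 hx.1 hy.1 hyx.subset
  have hyj0 : y j ≠ 0 := (hyx ▸ hj : j ∈ support y)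
  have hr : y j / x j = 1 ∨ y j / x j = -1 := by
    clear hyj
    rcases hx.2.2.1 j with h | h | h <;> rcases hy.2.2.1 j with h' | h' | h' <;>
      simp_all
  rcases hr with hr | hr <;> rw [hyj, hr] <;> simp

theorem IsOrientation.sub {O x : G.E → ℝ} (hO : IsOrientation G O) (hx : InOrient G x O) :
    IsOrientation G (O - x) := fun e => by
  rcases hx e with h | h <;> rcases hO e with h' | h' <;> norm_num [h, h', dir]

theorem isOrientation_finite : {O | IsOrientation G O}.Finite :=
  Set.Finite.pi' fun _ => ({0, 1} : Set ℝ).toFinite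

theorem inOrient_of_conformal_sub {O O' x : G.E → ℝ} (hO : IsOrientation G O)
    (hO' : IsOrientation G O') (hx : IsZPM G x) (hxO : Conformal x (O - O')) :
    InOrient G x O := fun e => by
  rcases hxO e with h | h
  · exact .inl h
  · right
    rcases hO e with h₁ | h₁ <;> rcases hO' e with h₂ | h₂ <;>
      rcases hx e with h₃ | h₃ | h₃ <;>
      simp only [dir, Pi.sub_apply, h₁, h₂, h₃] at h ⊢ <;> linarith

theorem sameCycClass_sub_mem {O O' : G.E → ℝ} (h : SameCycClass G O O') :
    O' - O ∈ cycleSpace G := by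
  induction h with
  | rel a b hab =>
    obtain ⟨x, hx, -, rfl⟩ := hab
    simpa using neg_mem hx.1
  | refl a => simp
  | symm a b _ ih => simpa using neg_mem ih
  | trans a b c _ _ ih₁ ih₂ => simpa using add_mem ih₁ ih₂

theorem eq_of_sigCompatible {σ : CycSig G} {O O' : G.E → ℝ} (hO : IsOrientation G O)
    (hO' : IsOrientation G O') (hσO : SigCompatible G σ O) (hσO' : SigCompatible G σ O')
    (h : SameCycClass G O O') : O = O' := by
  by_contra hne
  obtain ⟨x, hx, hxO⟩ := exists_isDirCycle_conformal
    (sameCycClass_sub_mem (Relation.EqvGen.symm _ _ h)) (sub_ne_zero.2 hne)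
  have h₁ := hσO x hx (inOrient_of_conformal_sub hO hO' hx.2.2.1 hxO)
  have h₂ := hσO' (-x) hx.neg
    (inOrient_of_conformal_sub hO' hO hx.neg.2.2.1 (by simpa using hxO.neg))
  rw [support_neg, ← h₁] at h₂
  exact hx.2.1 (neg_eq_self.1 h₂)

/-- `O'` arises from `O` by reversing a directed cycle of `O` that opposes its signature. -/
def SigRev (σ : CycSig G) (O O' : G.E → ℝ) : Prop :=
  ∃ C, IsCycle G C ∧ InOrient G (-σ.s C) O ∧ O' = O + σ.s C

theorem SigRev.cycRev {σ : CycSig G} {O O' : G.E → ℝ} (h : SigRev σ O O') :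
    CycRev G O O' := by
  obtain ⟨C, hC, hin, rfl⟩ := h
  exact ⟨-σ.s C, (σ.mem C hC).1.neg, hin, by rw [sub_neg_eq_add]⟩

theorem IsOrientation.of_reflTransGen_sigRev {σ : CycSig G} {O O' : G.E → ℝ}
    (hO : IsOrientation G O) (h : Relation.ReflTransGen (SigRev σ) O O') : IsOrientation G O' := by
  induction h with
  | refl => exact hO
  | tail _ hstep ih =>
    obtain ⟨C, -, hin, rfl⟩ := hstep
    simpa using ih.sub hin

open Classical in
theorem sum_pi_single_smul (σ : CycSig G) {C₀ : Set G.E} (hC₀ : IsCycle G C₀) :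
    ∑ C ∈ Finset.univ.filter (fun C => IsCycle G C),
      (Pi.single C₀ 1 : Set G.E → ℝ) C • σ.s C = σ.s C₀ := by
  rw [Finset.sum_eq_single_of_mem C₀ (by simpa using hC₀) fun C _ hC => by simp [hC]]
  simp

open Classical in
theorem exists_sum_of_transGen_sigRev {σ : CycSig G} {O O' : G.E → ℝ}
    (h : Relation.TransGen (SigRev σ) O O') :
    ∃ a : Set G.E → ℝ, (∀ C, 0 ≤ a C) ∧ (∃ C, IsCycle G C ∧ a C ≠ 0) ∧
      O' = O + ∑ C ∈ Finset.univ.filter (fun C => IsCycle G C), a C • σ.s C := by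
  have hsingle (C C' : Set G.E) : 0 ≤ (Pi.single C 1 : Set G.E → ℝ) C' := by
    by_cases h : C' = C <;> simp [h]
  induction h with
  | single hstep =>
    obtain ⟨C, hC, -, rfl⟩ := hstep
    exact ⟨Pi.single C 1, hsingle C, ⟨C, hC, by simp⟩, by rw [sum_pi_single_smul σ hC]⟩
  | tail _ hstep ih =>
    obtain ⟨C, hC, -, rfl⟩ := hstep
    obtain ⟨a, ha, -, rfl⟩ := ih
    refine ⟨a + Pi.single C 1, fun C' => add_nonneg (ha C') (hsingle C C'), ⟨C, hC, ?_⟩, ?_⟩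
    · simp only [Pi.add_apply, Pi.single_eq_same]; linarith [ha C]
    · simp only [Pi.add_apply, add_smul, Finset.sum_add_distrib, sum_pi_single_smul σ hC]
      abel

theorem AcyclicSig.not_transGen_sigRev {σ : CycSig G} (hσ : AcyclicSig G σ) (O : G.E → ℝ) :
    ¬ Relation.TransGen (SigRev σ) O O := fun h => by
  obtain ⟨a, ha, ⟨C, hC, haC⟩, hsum⟩ := exists_sum_of_transGen_sigRev h
  exact haC (hσ a ha (left_eq_add.1 hsum) C hC)

theorem sigCompatible_of_forall_not_sigRev {σ : CycSig G} {O : G.E → ℝ}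
    (h : ∀ O', ¬ SigRev σ O O') : SigCompatible G σ O := fun x hx hxO => by
  have hC : IsCycle G (support x) := ⟨x, hx, rfl⟩
  obtain ⟨hσx, hsupp⟩ := σ.mem _ hC
  rcases hσx.eq_or_eq_neg hx hsupp.symm with hxσ | hxσ
  · exact hxσ
  · exact absurd ⟨_, hC, by rwa [← hxσ], rfl⟩ (h _)

end GB

open GB in
theorem stmt_5_general (G : GB.Graph)
    (σ : GB.CycSig G) (hac : GB.AcyclicSig G σ)
    (O : G.E → ℝ) (hO : GB.IsOrientation G O) :
    ∃! O' : G.E → ℝ, GB.IsOrientation G O' ∧ GB.SigCompatible G σ O' ∧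
      GB.SameCycClass G O O' := by
  obtain ⟨O', hOO', hterm⟩ := Relation.exists_reflTransGen_forall_not hac.not_transGen_sigRev O
    (isOrientation_finite.subset fun _ h => hO.of_reflTransGen_sigRev h.to_reflTransGen)
  have hclass : SameCycClass G O O' :=
    Relation.EqvGen.mono (fun _ _ => SigRev.cycRev) _ _
      (Relation.EqvGen.reflTransGen_le_eqvGen _ _ _ hOO')
  have hO' := hO.of_reflTransGen_sigRev hOO'
  have hσO' := sigCompatible_of_forall_not_sigRev hterm
  refine ⟨O', ⟨hO', hσO', hclass⟩, fun O'' ⟨hO'', hσO'', hclass'⟩ => ?_⟩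
  exact eq_of_sigCompatible hO'' hO' hσO'' hσO'
    (Relation.EqvGen.trans _ _ _ (Relation.EqvGen.symm _ _ hclass') hclass)

open GB in
theorem stmt_5 (G : GB.Graph) (hconn : GB.Connected G)
    (σ : GB.CycSig G) (hac : GB.AcyclicSig G σ)
    (O : G.E → ℝ) (hO : GB.IsOrientation G O) :
    ∃! O' : G.E → ℝ, GB.IsOrientation G O' ∧ GB.SigCompatible G σ O' ∧
      GB.SameCycClass G O O' :=
  stmt_5_general G σ hac O hO
end

section
/- With the notation of the extended geometric bijection: let O⃗ be an orientation of G obtained from the (σ,σ*)-compatible orientation O⃗^cp by reversing disjoint directed cycles {C_i}_{i∈I} and cocycles {C*_j}_{j∈J}. Then φ_{σ,σ*}(O⃗) is a spanning forest if and only if I = ∅, which holds if and only if O⃗ is σ-compatible; and φ_{σ,σ*}(O⃗) is a connected spanning subgraph if and only if J = ∅, which holds if and only if O⃗ is σ*-compatible. -/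
open Function

open GB Matrix in
open GB in
lemma orth (G : Graph) {x y : G.E → ℝ} (hx : x ∈ cycleSpace G) (hy : y ∈ cocycleSpace G) :
    ∑ e, x e * y e = 0 := by
  obtain ⟨u, rfl⟩ := hy
  have hx0 : Matrix.mulVec (incMat G) x = 0 := hx
  have h : ∑ e, x e * ((incMat G)ᵀ.mulVecLin u) e
      = dotProduct x ((incMat G)ᵀ.mulVec u) := rfl
  rw [h, Matrix.dotProduct_mulVec, Matrix.vecMul_transpose, hx0, zero_dotProduct]

lemma supp_neg {E : Type} (x : E → ℝ) : Function.support (-x) = Function.support x := by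
  ext e; simp

open GB in
lemma isDirCycle_neg (G : Graph) {x : G.E → ℝ} (h : IsDirCycle G x) : IsDirCycle G (-x) := by
  obtain ⟨h1, h2, h3, h4⟩ := h
  refine ⟨neg_mem h1, neg_ne_zero.mpr h2, fun e => ?_, fun y hy hy0 hsub => ?_⟩
  · rcases h3 e with h | h | h <;> simp [h]
  · rw [supp_neg] at *
    exact h4 y hy hy0 hsub

open GB in
lemma isDirCocycle_neg (G : Graph) {x : G.E → ℝ} (h : IsDirCocycle G x) : IsDirCocycle G (-x) := by
  obtain ⟨h1, h2, h3, h4⟩ := h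
  refine ⟨neg_mem h1, neg_ne_zero.mpr h2, fun e => ?_, fun y hy hy0 hsub => ?_⟩
  · rcases h3 e with h | h | h <;> simp [h]
  · rw [supp_neg] at *
    exact h4 y hy hy0 hsub
theorem stmt_12 (G : GB.Graph) (hconn : GB.Connected G)
    (σc : GB.CycSig G) (σs : GB.CocycSig G)
    (hac : GB.AcyclicSig G σc) (hacs : GB.AcyclicCosig G σs)
    (T : Finset G.E) (hT : GB.IsSpanningTree G T)
    (Ocp : G.E → ℝ) (hcp : GB.Compatible G σc σs Ocp) (hg : GB.GOrient G σc σs T Ocp)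
    (n m : ℕ) (c : Fin n → (G.E → ℝ)) (d : Fin m → (G.E → ℝ))
    (hc : ∀ i, GB.IsDirCycle G (c i) ∧ GB.InOrient G (c i) Ocp)
    (hd : ∀ j, GB.IsDirCocycle G (d j) ∧ GB.InOrient G (d j) Ocp)
    (hcc : ∀ i j, i ≠ j → Disjoint (Function.support (c i)) (Function.support (c j)))
    (hdd : ∀ i j, i ≠ j → Disjoint (Function.support (d i)) (Function.support (d j)))
    (hcd : ∀ i j, Disjoint (Function.support (c i)) (Function.support (d j)))
    (O : G.E → ℝ) (hO : O = Ocp - (∑ i, c i) - (∑ j, d j))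
    (S : Set G.E)
    (hS : S = ((↑T : Set G.E) ∪ (⋃ i, Function.support (c i))) \ (⋃ j, Function.support (d j))) :
    ((∀ x, GB.IsDirCycle G x → ¬ Function.support x ⊆ S) ↔ n = 0) ∧
    (n = 0 ↔ GB.SigCompatible G σc O) ∧
    ((∀ x, GB.IsDirCocycle G x → ¬ Function.support x ⊆ Sᶜ) ↔ m = 0) ∧
    (m = 0 ↔ GB.CosigCompatible G σs O) := by
  classical
  have hOe : ∀ e, O e = Ocp e - (∑ i, c i e) - (∑ j, d j e) := by
    intro e; rw [hO]; simp
  have hce : ∀ i e, c i e ≠ 0 → (∑ i', c i' e) = c i e := by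
    intro i e he
    refine Finset.sum_eq_single_of_mem i (Finset.mem_univ i) ?_
    intro j _ hj
    by_contra hne
    exact Set.disjoint_left.mp (hcc j i hj) hne he
  have hde : ∀ j e, d j e ≠ 0 → (∑ j', d j' e) = d j e := by
    intro j e he
    refine Finset.sum_eq_single_of_mem j (Finset.mem_univ j) ?_
    intro i _ hi
    by_contra hne
    exact Set.disjoint_left.mp (hdd i j hi) hne he
  have hcde : ∀ i e, c i e ≠ 0 → (∑ j, d j e) = 0 := by
    intro i e he
    refine Finset.sum_eq_zero fun j _ => ?_
    by_contra hne
    exact Set.disjoint_left.mp (hcd i j) he hne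
  have hdce : ∀ j e, d j e ≠ 0 → (∑ i, c i e) = 0 := by
    intro j e he
    refine Finset.sum_eq_zero fun i _ => ?_
    by_contra hne
    exact Set.disjoint_left.mp (hcd i j) hne he
  have hdirO_c : ∀ i e, c i e ≠ 0 → GB.dir G O e = - c i e := by
    intro i e he
    have h1 := hce i e he
    have h2 := hcde i e he
    have h3 : c i e = GB.dir G Ocp e := ((hc i).2 e).resolve_left he
    have h3' : c i e = 2 * Ocp e - 1 := h3
    have h4 := hOe e
    rw [h1, h2] at h4
    show 2 * O e - 1 = - c i e
    rw [h4, h3']; ring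
  have hdirO_d : ∀ j e, d j e ≠ 0 → GB.dir G O e = - d j e := by
    intro j e he
    have h1 := hde j e he
    have h2 := hdce j e he
    have h3 : d j e = GB.dir G Ocp e := ((hd j).2 e).resolve_left he
    have h3' : d j e = 2 * Ocp e - 1 := h3
    have h4 := hOe e
    rw [h1, h2] at h4
    show 2 * O e - 1 = - d j e
    rw [h4, h3']; ring
  refine ⟨⟨?_, ?_⟩, ⟨?_, ?_⟩, ⟨?_, ?_⟩, ⟨?_, ?_⟩⟩
  -- Part A mp : forest → n = 0
  · intro H
    by_contra hn
    have i0 : Fin n := ⟨0, Nat.pos_of_ne_zero hn⟩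
    apply H (c i0) (hc i0).1
    rw [hS]
    intro e he
    refine ⟨Or.inr (Set.mem_iUnion.mpr ⟨i0, he⟩), ?_⟩
    simp only [Set.mem_iUnion, not_exists]
    intro j hej
    exact Set.disjoint_left.mp (hcd i0 j) he hej
  -- Part A mpr : n = 0 → forest
  · intro hn x hx hsub
    subst hn
    apply hT.1 x hx
    intro e he
    have h1 := hsub he
    rw [hS] at h1
    rcases h1.1 with h | h
    · exact h
    · exact (Set.mem_iUnion.mp h).choose.elim0
  -- Part B mp : n = 0 → SigCompatible O
  · intro hn x hx hxO
    subst hn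
    have hxd : ∀ j e, x e ≠ 0 → d j e = 0 := by
      intro j
      have h0 : ∑ e, x e * d j e = 0 := orth G hx.1 (hd j).1.1
      have hle : ∀ e ∈ Finset.univ, x e * d j e ≤ 0 := by
        intro e _
        by_cases hxe : x e = 0; · simp [hxe]
        by_cases hde' : d j e = 0; · simp [hde']
        have h1 : x e = GB.dir G O e := (hxO e).resolve_left hxe
        have h2 : GB.dir G O e = - d j e := hdirO_d j e hde'
        rcases (hd j).1.2.2.1 e with h | h | h
        · exact absurd h hde'
        · rw [h1, h2, h]; norm_num
        · rw [h1, h2, h]; norm_num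
      have hz := (Finset.sum_eq_zero_iff_of_nonpos hle).mp h0
      intro e hxe
      by_contra hde'
      have h1 : x e = GB.dir G O e := (hxO e).resolve_left hxe
      have h2 := hdirO_d j e hde'
      have h3 := hz e (Finset.mem_univ e)
      rw [h1, h2] at h3
      have : d j e = 0 := by nlinarith [h3]
      exact hde' this
    have hxOcp : GB.InOrient G x Ocp := by
      intro e
      by_cases hxe : x e = 0; · exact Or.inl hxe
      right
      have h1 : x e = GB.dir G O e := (hxO e).resolve_left hxe
      have h2 : O e = Ocp e := by
        rw [hOe e]
        have hc0 : (∑ i : Fin 0, c i e) = 0 := by simp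
        have hd0 : (∑ j, d j e) = 0 := Finset.sum_eq_zero fun j _ => hxd j e hxe
        rw [hc0, hd0]; ring
      rw [h1]
      show 2 * O e - 1 = 2 * Ocp e - 1
      rw [h2]
    exact hcp.1 x hx hxOcp
  -- Part B mpr : SigCompatible O → n = 0
  · intro hcompat
    by_contra hn
    have i0 : Fin n := ⟨0, Nat.pos_of_ne_zero hn⟩
    have hx := (hc i0).1
    have hnegO : GB.InOrient G (-(c i0)) O := by
      intro e
      by_cases he : c i0 e = 0
      · left; simp [he]
      right
      show -(c i0 e) = GB.dir G O e
      rw [hdirO_c i0 e he]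
    have h1 : c i0 = σc.s (Function.support (c i0)) := hcp.1 _ hx (hc i0).2
    have h2 : -(c i0) = σc.s (Function.support (-(c i0))) :=
      hcompat _ (isDirCycle_neg G hx) hnegO
    rw [supp_neg] at h2
    have heq : c i0 = -(c i0) := h1.trans h2.symm
    have hz : c i0 = 0 := by
      funext e
      have := congrFun heq e
      simp only [Pi.neg_apply, Pi.zero_apply] at this ⊢
      linarith
    exact hx.2.1 hz
  -- Part C mp : connected → m = 0
  · intro H
    by_contra hm
    have j0 : Fin m := ⟨0, Nat.pos_of_ne_zero hm⟩
    apply H (d j0) (hd j0).1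
    intro e he
    rw [hS]
    simp only [Set.mem_compl_iff, Set.mem_diff, not_and, not_not]
    intro _
    exact Set.mem_iUnion.mpr ⟨j0, he⟩
  -- Part C mpr : m = 0 → connected
  · intro hm x hx hsub
    subst hm
    apply hT.2 x hx
    intro e he
    have h1 := hsub he
    rw [hS] at h1
    simp only [Set.mem_compl_iff, Set.mem_diff, Set.mem_union, not_and, not_not] at h1 ⊢
    intro heT
    have : e ∈ ⋃ j : Fin 0, Function.support (d j) := h1 (Or.inl heT)
    exact (Set.mem_iUnion.mp this).choose.elim0
  -- Part D mp : m = 0 → CosigCompatible O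
  · intro hm x hx hxO
    subst hm
    have hxc : ∀ i e, x e ≠ 0 → c i e = 0 := by
      intro i
      have h0 : ∑ e, c i e * x e = 0 := orth G (hc i).1.1 hx.1
      have hle : ∀ e ∈ Finset.univ, c i e * x e ≤ 0 := by
        intro e _
        by_cases hxe : x e = 0; · simp [hxe]
        by_cases hce' : c i e = 0; · simp [hce']
        have h1 : x e = GB.dir G O e := (hxO e).resolve_left hxe
        have h2 : GB.dir G O e = - c i e := hdirO_c i e hce'
        rcases (hc i).1.2.2.1 e with h | h | h
        · exact absurd h hce'
        · rw [h1, h2, h]; norm_num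
        · rw [h1, h2, h]; norm_num
      have hz := (Finset.sum_eq_zero_iff_of_nonpos hle).mp h0
      intro e hxe
      by_contra hce'
      have h1 : x e = GB.dir G O e := (hxO e).resolve_left hxe
      have h2 := hdirO_c i e hce'
      have h3 := hz e (Finset.mem_univ e)
      rw [h1, h2] at h3
      have : c i e = 0 := by nlinarith [h3]
      exact hce' this
    have hxOcp : GB.InOrient G x Ocp := by
      intro e
      by_cases hxe : x e = 0; · exact Or.inl hxe
      right
      have h1 : x e = GB.dir G O e := (hxO e).resolve_left hxe
      have h2 : O e = Ocp e := by
        rw [hOe e]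
        have hd0 : (∑ j : Fin 0, d j e) = 0 := by simp
        have hc0 : (∑ i, c i e) = 0 := Finset.sum_eq_zero fun i _ => hxc i e hxe
        rw [hc0, hd0]; ring
      rw [h1]
      show 2 * O e - 1 = 2 * Ocp e - 1
      rw [h2]
    exact hcp.2 x hx hxOcp
  -- Part D mpr : CosigCompatible O → m = 0
  · intro hcompat
    by_contra hm
    have j0 : Fin m := ⟨0, Nat.pos_of_ne_zero hm⟩
    have hx := (hd j0).1
    have hnegO : GB.InOrient G (-(d j0)) O := by
      intro e
      by_cases he : d j0 e = 0
      · left; simp [he]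
      right
      show -(d j0 e) = GB.dir G O e
      rw [hdirO_d j0 e he]
    have h1 : d j0 = σs.s (Function.support (d j0)) := hcp.2 _ hx (hd j0).2
    have h2 : -(d j0) = σs.s (Function.support (-(d j0))) :=
      hcompat _ (isDirCocycle_neg G hx) hnegO
    rw [supp_neg] at h2
    have heq : d j0 = -(d j0) := h1.trans h2.symm
    have hz : d j0 = 0 := by
      funext e
      have := congrFun heq e
      simp only [Pi.neg_apply, Pi.zero_apply] at this ⊢
      linarith
    exact hx.2.1 hz
end
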